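/- For all a, b > 0 with a+b−1 > 0, and all x ∈ ℂ: 2F3((a+b)/2, (a+b−1)/2; a, b, a+b−1; x) = 0F1(; a; x/4) · 0F1(; b; x/4). -/

import Mathlib

/-- Rising factorial of a real number. -/
noncomputable def risingR (a : ℝ) (n : ℕ) : ℝ := (ascPochhammer ℝ n).eval a

noncomputable def fallingR (a : ℝ) (n : ℕ) : ℝ := (descPochhammer ℝ n).eval a

lemma risingR_zero (a : ℝ) : risingR a 0 = 1 := by simp [risingR]

lemma risingR_succ (a : ℝ) (n : ℕ) : risingR a (n + 1) = risingR a n * (a + n) :=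
  ascPochhammer_succ_eval n a

lemma risingR_succ_left (a : ℝ) (n : ℕ) : risingR a (n + 1) = a * risingR (a + 1) n := by
  unfold risingR
  rw [ascPochhammer_succ_left, Polynomial.X_mul, Polynomial.eval_mul_X, Polynomial.eval_comp]
  simp [mul_comm]

lemma fallingR_succ (a : ℝ) (n : ℕ) : fallingR a (n + 1) = fallingR a n * (a - n) :=
  descPochhammer_succ_eval n a

lemma risingR_pos {a : ℝ} (ha : 0 < a) : ∀ n, 0 < risingR a n
  | 0 => by simp [risingR_zero]
  | n + 1 => by
    rw [risingR_succ]
    exact mul_pos (risingR_pos ha n) (by positivity)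

lemma risingR_add (a : ℝ) (n m : ℕ) :
    risingR a (n + m) = risingR a n * risingR (a + n) m := by
  unfold risingR
  rw [← ascPochhammer_mul, Polynomial.eval_mul, Polynomial.eval_comp]
  simp

lemma risingR_eq_fallingR (a : ℝ) (n : ℕ) : risingR a n = fallingR (a + n - 1) n := by
  unfold risingR fallingR
  rw [descPochhammer_eval_eq_ascPochhammer]
  ring_nf

lemma risingR_dup (c : ℝ) : ∀ n : ℕ,
    risingR (c / 2) n * risingR ((c + 1) / 2) n * 4 ^ n = risingR c (2 * n)
  | 0 => by simp [risingR_zero]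
  | n + 1 => by
    have h : 2 * (n + 1) = (2 * n + 1) + 1 := by ring
    rw [h, risingR_succ, risingR_succ, risingR_succ, risingR_succ]
    push_cast
    linear_combination (c + 2 * n) * (c + 2 * n + 1) * risingR_dup c n

lemma one_le_risingR {a : ℝ} (ha : 1 ≤ a) : ∀ n, 1 ≤ risingR a n
  | 0 => by simp [risingR_zero]
  | n + 1 => by
    rw [risingR_succ]
    nlinarith [one_le_risingR ha n, (Nat.cast_nonneg n : (0:ℝ) ≤ n)]

lemma min_le_risingR {a : ℝ} (ha : 0 < a) : ∀ n, min a 1 ≤ risingR a n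
  | 0 => by simp [risingR_zero]
  | n + 1 => by
    rw [risingR_succ_left]
    calc min a 1 ≤ a * 1 := by rw [mul_one]; exact min_le_left a 1
    _ ≤ a * risingR (a + 1) n := by
        exact mul_le_mul_of_nonneg_left (one_le_risingR (by linarith) n) ha.le

lemma vandermondeR (x y : ℝ) : ∀ n : ℕ,
    ∑ k ∈ Finset.range (n + 1), (n.choose k : ℝ) * fallingR x k * fallingR y (n - k)
      = fallingR (x + y) n
  | 0 => by simp [fallingR]
  | n + 1 => by
    have key : ∑ k ∈ Finset.range (n + 1),
        (n.choose k : ℝ) * fallingR x k * fallingR y (n + 1 - k)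
        = ∑ k ∈ Finset.range (n + 1),
          (n.choose k : ℝ) * fallingR x k * (fallingR y (n - k) * (y - (n - k))) := by
      refine Finset.sum_congr rfl fun k hk => ?_
      have hk' : k ≤ n := Nat.lt_succ_iff.mp (Finset.mem_range.mp hk)
      have : n + 1 - k = (n - k) + 1 := by omega
      rw [this, fallingR_succ, Nat.cast_sub hk']
    rw [Finset.sum_range_succ' _ (n + 1)]
    have e1 : ∀ k ∈ Finset.range (n + 1),
        ((n + 1).choose (k + 1) : ℝ) * fallingR x (k + 1) * fallingR y (n + 1 - (k + 1))
        = (n.choose k : ℝ) * fallingR x k * fallingR y (n - k) * (x - k)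
          + (n.choose (k + 1) : ℝ) * fallingR x (k + 1) * fallingR y (n + 1 - (k + 1)) := by
      intro k hk
      rw [Nat.choose_succ_succ, Nat.cast_add, fallingR_succ]
      have : n + 1 - (k + 1) = n - k := by omega
      rw [this]
      ring
    rw [Finset.sum_congr rfl e1, Finset.sum_add_distrib]
    have e2 : ∑ k ∈ Finset.range (n + 1),
        (n.choose (k + 1) : ℝ) * fallingR x (k + 1) * fallingR y (n + 1 - (k + 1))
        + ((n + 1).choose 0 : ℝ) * fallingR x 0 * fallingR y (n + 1 - 0)
        = ∑ k ∈ Finset.range (n + 2),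
            (n.choose k : ℝ) * fallingR x k * fallingR y (n + 1 - k) := by
      rw [Finset.sum_range_succ' _ (n + 1)]
      simp
    have e3 : ∑ k ∈ Finset.range (n + 2),
        (n.choose k : ℝ) * fallingR x k * fallingR y (n + 1 - k)
        = ∑ k ∈ Finset.range (n + 1),
            (n.choose k : ℝ) * fallingR x k * fallingR y (n + 1 - k) := by
      rw [Finset.sum_range_succ]
      simp
    have goal2 : fallingR (x + y) (n + 1) = fallingR (x + y) n * (x + y - n) := by
      rw [fallingR_succ]
    rw [add_assoc, e2, e3, key, goal2, ← vandermondeR x y n]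
    rw [Finset.sum_mul, ← Finset.sum_add_distrib]
    refine Finset.sum_congr rfl fun k hk => ?_
    ring

lemma fact_ne (n : ℕ) : (n.factorial : ℝ) ≠ 0 := Nat.cast_ne_zero.mpr n.factorial_ne_zero

lemma coeffR {a b : ℝ} (ha : 0 < a) (hb : 0 < b) (hab : 0 < a + b - 1) (n : ℕ) :
    ∑ k ∈ Finset.range (n + 1),
      1 / (risingR a k * k.factorial) * (1 / (risingR b (n - k) * (n - k).factorial))
    = risingR ((a + b) / 2) n * risingR ((a + b - 1) / 2) n /
        (risingR a n * risingR b n * risingR (a + b - 1) n * n.factorial) * 4 ^ n := by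
  have hA := risingR_pos ha n
  have hB := risingR_pos hb n
  have hC := risingR_pos hab n
  have key1 : ∑ k ∈ Finset.range (n + 1),
      1 / (risingR a k * k.factorial) * (1 / (risingR b (n - k) * (n - k).factorial))
      = risingR (a + b - 1 + n) n / (risingR a n * risingR b n * n.factorial) := by
    have step : ∀ k ∈ Finset.range (n + 1),
        1 / (risingR a k * k.factorial) * (1 / (risingR b (n - k) * (n - k).factorial))
        = (n.choose k : ℝ) * fallingR (b + n - 1) k * fallingR (a + n - 1) (n - k) /
            (risingR a n * risingR b n * n.factorial) := by
      intro k hk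
      have hkn : k ≤ n := Nat.lt_succ_iff.mp (Finset.mem_range.mp hk)
      have hra : risingR a n = risingR a k * risingR (a + k) (n - k) := by
        rw [← risingR_add]; congr 1; omega
      have hrb : risingR b n = risingR b (n - k) * risingR (b + ((n - k : ℕ) : ℝ)) k := by
        rw [← risingR_add]; congr 1; omega
      have hfa : fallingR (a + n - 1) (n - k) = risingR (a + k) (n - k) := by
        rw [risingR_eq_fallingR]; congr 1
        rw [Nat.cast_sub hkn]; ring
      have hfb : fallingR (b + n - 1) k = risingR (b + ((n - k : ℕ) : ℝ)) k := by
        rw [risingR_eq_fallingR]; congr 1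
        rw [Nat.cast_sub hkn]; ring
      have hfact : (n.factorial : ℝ)
          = n.choose k * k.factorial * (n - k).factorial := by
        exact_mod_cast (Nat.choose_mul_factorial_mul_factorial hkn).symm
      have h1 := risingR_pos ha k
      have h2 := risingR_pos hb (n - k)
      have h3 := risingR_pos (show (0:ℝ) < a + k by positivity) (n - k)
      have h4 := risingR_pos (show (0:ℝ) < b + ((n - k : ℕ) : ℝ) by positivity) k
      rw [hfa, hfb]
      rw [hra, hrb, hfact]
      rw [Nat.cast_sub hkn] at h4 ⊢
      have hc : (0:ℝ) < n.choose k := by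
        exact_mod_cast Nat.choose_pos hkn
      field_simp
    rw [Finset.sum_congr rfl step, ← Finset.sum_div]
    congr 1
    rw [vandermondeR (b + n - 1) (a + n - 1) n, risingR_eq_fallingR]
    congr 1
    ring
  have key2 : risingR ((a + b) / 2) n * risingR ((a + b - 1) / 2) n * 4 ^ n
      = risingR (a + b - 1) n * risingR (a + b - 1 + n) n := by
    have d := risingR_dup (a + b - 1) n
    rw [show (a + b - 1 + 1) / 2 = (a + b) / 2 by ring] at d
    rw [show 2 * n = n + n by ring, risingR_add] at d
    linear_combination d
  rw [key1]
  rw [div_mul_eq_mul_div, div_eq_div_iff (by positivity) (by positivity)]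
  linear_combination (-(risingR a n * risingR b n * (n.factorial : ℝ))) * key2

lemma summable_norm_aux {a : ℝ} (ha : 0 < a) (x : ℂ) :
    Summable fun k : ℕ => ‖((1 / (risingR a k * k.factorial) : ℝ) : ℂ) * (x / 4) ^ k‖ := by
  have hmin : (0:ℝ) < min a 1 := lt_min ha one_pos
  refine Summable.of_nonneg_of_le (fun k => norm_nonneg _) (fun k => ?_)
    ((Real.summable_pow_div_factorial (‖x‖ / 4)).mul_left (1 / min a 1))
  have hk := risingR_pos ha k
  have hkf : (0:ℝ) < (k.factorial : ℝ) := by positivity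
  have hxnorm : ‖x / 4‖ = ‖x‖ / 4 := by
    rw [norm_div]; norm_num
  rw [norm_mul, norm_pow, hxnorm, Complex.norm_real,
    Real.norm_of_nonneg (by positivity : (0:ℝ) ≤ 1 / (risingR a k * k.factorial))]
  have : 1 / min a 1 * ((‖x‖ / 4) ^ k / k.factorial)
      = 1 / (min a 1 * k.factorial) * (‖x‖ / 4) ^ k := by ring
  rw [this]
  have hle : min a 1 * k.factorial ≤ risingR a k * k.factorial :=
    mul_le_mul_of_nonneg_right (min_le_risingR ha k) hkf.le
  have h1 : 1 / (risingR a k * k.factorial) ≤ 1 / (min a 1 * k.factorial) :=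
    one_div_le_one_div_of_le (by positivity) hle
  exact mul_le_mul_of_nonneg_right h1 (by positivity)


/-- Bailey's product formula:
`2F3((a+b)/2, (a+b-1)/2; a, b, a+b-1; x) = 0F1(; a; x/4) · 0F1(; b; x/4)`. -/
theorem twoFthree_eq_zeroFone_mul_zeroFone (a b : ℝ) (ha : 0 < a) (hb : 0 < b)
    (hab : 0 < a + b - 1) :
    ∀ x : ℂ,
      (∑' n : ℕ,
        ((risingR ((a + b) / 2) n * risingR ((a + b - 1) / 2) n /
            (risingR a n * risingR b n * risingR (a + b - 1) n * n.factorial) : ℝ) : ℂ)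
          * x ^ n)
      = (∑' n : ℕ, ((1 / (risingR a n * n.factorial) : ℝ) : ℂ) * (x / 4) ^ n)
        * (∑' n : ℕ, ((1 / (risingR b n * n.factorial) : ℝ) : ℂ) * (x / 4) ^ n) := by
  intro x
  rw [tsum_mul_tsum_eq_tsum_sum_range_of_summable_norm (summable_norm_aux ha x)
    (summable_norm_aux hb x)]
  refine tsum_congr fun n => ?_
  have step : ∀ k ∈ Finset.range (n + 1),
      ((1 / (risingR a k * k.factorial) : ℝ) : ℂ) * (x / 4) ^ k *
        (((1 / (risingR b (n - k) * (n - k).factorial) : ℝ) : ℂ) * (x / 4) ^ (n - k))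
      = ((1 / (risingR a k * k.factorial) *
          (1 / (risingR b (n - k) * (n - k).factorial)) : ℝ) : ℂ) * (x / 4) ^ n := by
    intro k hk
    have hkn : k ≤ n := Nat.lt_succ_iff.mp (Finset.mem_range.mp hk)
    have : (x / 4) ^ k * (x / 4) ^ (n - k) = (x / 4) ^ n := by
      rw [← pow_add]; congr 1; omega
    push_cast
    rw [← this]
    ring
  rw [Finset.sum_congr rfl step, ← Finset.sum_mul, ← Complex.ofReal_sum,
    coeffR ha hb hab n]
  have h4 : ((4 : ℂ)) ^ n ≠ 0 := by norm_num
  have key : ((4:ℂ)) ^ n * (x / 4) ^ n = x ^ n := by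
    rw [← mul_pow, mul_div_cancel₀ x (by norm_num : (4:ℂ) ≠ 0)]
  push_cast
  rw [← key]
  ring
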